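/- Let x be a sequence in a first countable space X, let Z_μ be a generalized density ideal determined by a partition (I_n) of ℕ into nonempty finite sets and submeasures (μ_n) concentrated on the I_n with limsup μ_n(I_n) > 0, and fix q ∈ (0, limsup_n μ_n(I_n)). Fix ℓ ∈ X with decreasing local base (U_m). Then the set V_ℓ(x;q) of all ω ∈ (0,1] such that limsup_n μ_n({k : (x↾ω)_k ∈ U_m} ∩ I_n) ≥ q for every m is either comeager in (0,1] or empty. -/

import Mathlib

open Filter Topology Set MeasureTheory
open scoped ENNReal

noncomputable section

/-- An ideal on ℕ: contains all finite sets, closed under subsets and finite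
unions, and does not contain ℕ itself. -/
def IsIdealOn (I : Set (Set ℕ)) : Prop :=
  (∀ ⦃A B : Set ℕ⦄, A ⊆ B → B ∈ I → A ∈ I) ∧
  (∀ ⦃A B : Set ℕ⦄, A ∈ I → B ∈ I → A ∪ B ∈ I) ∧
  (∀ A : Set ℕ, A.Finite → A ∈ I) ∧
  (Set.univ : Set ℕ) ∉ I

/-- `l` is an `I`-cluster point of the sequence `x`. -/
def IdealClusterPt {X : Type*} [TopologicalSpace X] (I : Set (Set ℕ)) (x : ℕ → X) (l : X) : Prop :=
  ∀ U ∈ 𝓝 l, {n | x n ∈ U} ∉ I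

/-- `l` is an `I`-limit point of the sequence `x`. -/
def IdealLimitPt {X : Type*} [TopologicalSpace X] (I : Set (Set ℕ)) (x : ℕ → X) (l : X) : Prop :=
  ∃ k : ℕ → ℕ, StrictMono k ∧ Tendsto (x ∘ k) atTop (𝓝 l) ∧ Set.range k ∉ I

/-- Ordinary limit points of a sequence. -/
def limitPts {X : Type*} [TopologicalSpace X] (x : ℕ → X) : Set X :=
  {l | ∃ k : ℕ → ℕ, StrictMono k ∧ Tendsto (x ∘ k) atTop (𝓝 l)}

/-- The `i`-th digit (0-indexed; representing `d_{i+1}`) of the non-terminating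
dyadic expansion of `ω ∈ (0,1]`. -/
def dyadicDigit (ω : ℝ) (i : ℕ) : ℤ :=
  ⌈(2:ℝ) ^ (i + 1) * ω⌉ - 2 * ⌈(2:ℝ) ^ i * ω⌉ + 1

/-- The subsequence `x↾ω` of `x` keeping `x i` iff the dyadic digit of `ω` at `i` is `1`. -/
def subseq {X : Type*} (x : ℕ → X) (ω : ℝ) : ℕ → X :=
  fun k => x (Nat.nth (fun i => dyadicDigit ω i = 1) k)

open Classical in
/-- Characteristic-function embedding of `P(ℕ)` into Cantor space. -/
def chi (A : Set ℕ) : ℕ → Bool := fun n => if n ∈ A then true else false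

def IsFsigma {α : Type*} [TopologicalSpace α] (s : Set α) : Prop :=
  ∃ F : ℕ → Set α, (∀ n, IsClosed (F n)) ∧ s = ⋃ n, F n

def IsFsigmaDelta {α : Type*} [TopologicalSpace α] (s : Set α) : Prop :=
  ∃ F : ℕ → Set α, (∀ n, IsFsigma (F n)) ∧ s = ⋂ n, F n

/-- `I` is `F_σ`-separated from its dual filter. -/
def FsigmaSeparated (I : Set (Set ℕ)) : Prop :=
  ∃ A : Set (ℕ → Bool), IsFsigma A ∧ chi '' I ⊆ A ∧ A ∩ chi '' {S : Set ℕ | Sᶜ ∈ I} = ∅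

/-- A submeasure on ℕ. -/
def IsSubmeasureOn (φ : Set ℕ → ℝ≥0∞) : Prop :=
  φ ∅ = 0 ∧ (∀ ⦃A B : Set ℕ⦄, A ⊆ B → φ A ≤ φ B) ∧
    (∀ A B : Set ℕ, φ (A ∪ B) ≤ φ A + φ B) ∧ ∀ n : ℕ, φ {n} ≠ ⊤

/-- A partition of ℕ into nonempty finite sets. -/
def IsFinPartition (P : ℕ → Set ℕ) : Prop :=
  (∀ n, (P n).Finite ∧ (P n).Nonempty) ∧ (⋃ n, P n) = Set.univ ∧
    Pairwise (Function.onFun Disjoint P)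

/-- The generalized density ideal determined by `(P n)` and `(μ n)`. -/
def Zmu (P : ℕ → Set ℕ) (μ : ℕ → Set ℕ → ℝ≥0∞) : Set (Set ℕ) :=
  {A | Tendsto (fun n => μ n (A ∩ P n)) atTop (𝓝 0)}

def IsGenDensityIdeal (I : Set (Set ℕ)) : Prop :=
  ∃ (P : ℕ → Set ℕ) (μ : ℕ → Set ℕ → ℝ≥0∞), IsFinPartition P ∧
    (∀ n, IsSubmeasureOn (μ n)) ∧ (∀ n A, μ n A = μ n (A ∩ P n)) ∧
    Filter.limsup (fun n => μ n (P n)) atTop ≠ 0 ∧ I = Zmu P μ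

/-- Exhaustive ideal of a submeasure. -/
def Exh (φ : Set ℕ → ℝ≥0∞) : Set (Set ℕ) :=
  {A | Tendsto (fun n => φ (A \ Set.Iio n)) atTop (𝓝 0)}

open Classical in
/-- The ideal `I_α`. -/
def Ialpha (α : ℝ) : Set (Set ℕ) :=
  {A | (fun n => ∑ i ∈ Finset.Icc 1 n, if i ∈ A then (i:ℝ) ^ α else 0)
      =o[atTop] (fun n => ∑ i ∈ Finset.Icc 1 n, (i:ℝ) ^ α)}

open Classical in
/-- The ideal of natural density zero sets. -/
def densityZero : Set (Set ℕ) :=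
  {A | Tendsto (fun n : ℕ => (∑ i ∈ Finset.range n, if i ∈ A then (1:ℝ) else 0) / n)
      atTop (𝓝 0)}

open Classical in
def phiEU (f : ℕ → ℝ) (A : Set ℕ) : ℝ :=
  ⨆ n : ℕ, (∑ i ∈ Finset.Icc 1 n, if i ∈ A then f i else 0) / (∑ i ∈ Finset.Icc 1 n, f i)

def ExhReal (φ : Set ℕ → ℝ) : Set (Set ℕ) :=
  {A | Tendsto (fun n => φ (A \ Set.Iio n)) atTop (𝓝 0)}

def IsErdosUlamIdeal (I : Set (Set ℕ)) : Prop :=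
  ∃ f : ℕ → ℝ, (∀ n, 0 < f n) ∧
    Tendsto (fun n => ∑ i ∈ Finset.Icc 1 n, f i) atTop atTop ∧
    (fun n => f n) =o[atTop] (fun n => ∑ i ∈ Finset.Icc 1 n, f i) ∧
    I = ExhReal (phiEU f)

end

/-! If some `U m` contains only finitely many terms of `x`, so does every subsequence `x↾ω`; the
limsup for that `m` is then `0 < q` and `V` is empty. Otherwise the complement of `V` misses the
countable intersection, over `m` and `N`, of the sets of `ω` for which some `n ≥ N` has
`q < μ_n({k : (x↾ω)_k ∈ U m} ∩ I_n)`, and each of these sets has dense interior. Given `ω₀`, keep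
its first `p` binary digits, pick `n ≥ N` with `q < μ_n(I_n)` and `I_n` beyond the positions already
used, and continue the digits so that every position in `I_n` selects a term of `x` in `U m`.
Finishing with a pattern that is neither eventually `0` nor eventually `1` gives a non-dyadic point,
near which finitely many digits, and hence the selected terms, stay fixed. -/

lemma ceil_two_pow_succ_mul (ω : ℝ) (i : ℕ) :
    ⌈(2:ℝ) ^ (i + 1) * ω⌉ = 2 * ⌈(2:ℝ) ^ i * ω⌉ + dyadicDigit ω i - 1 := by
  unfold dyadicDigit; ring

lemma dyadicDigit_eq_zero_or_one (ω : ℝ) (i : ℕ) : dyadicDigit ω i = 0 ∨ dyadicDigit ω i = 1 := by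
  have hceil := Int.le_ceil ((2:ℝ) ^ i * ω)
  have hceil' := Int.ceil_lt_add_one ((2:ℝ) ^ i * ω)
  have hle : ⌈(2:ℝ) ^ (i + 1) * ω⌉ ≤ 2 * ⌈(2:ℝ) ^ i * ω⌉ := by
    rw [Int.ceil_le, pow_succ]; push_cast; nlinarith
  have hgt : 2 * ⌈(2:ℝ) ^ i * ω⌉ - 2 < ⌈(2:ℝ) ^ (i + 1) * ω⌉ := by
    rw [Int.lt_ceil, pow_succ]; push_cast; nlinarith
  unfold dyadicDigit; omega

lemma ceil_intCast_add_of_mem_Ioc {z : ℤ} {v : ℝ} (hv : v ∈ Ioc 0 1) : ⌈(z:ℝ) + v⌉ = z + 1 := by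
  rw [Int.ceil_eq_iff]; push_cast; constructor <;> linarith [hv.1, hv.2]

lemma ceil_two_pow_mul_eq_of_dyadicDigit_eq {ω ω' : ℝ} (hω : ω ∈ Ioc 0 1) (hω' : ω' ∈ Ioc 0 1) :
    ∀ p : ℕ, (∀ i < p, dyadicDigit ω i = dyadicDigit ω' i) →
      ⌈(2:ℝ) ^ p * ω⌉ = ⌈(2:ℝ) ^ p * ω'⌉
  | 0, _ => by
    simpa using (ceil_intCast_add_of_mem_Ioc (z := 0) hω).trans
      (ceil_intCast_add_of_mem_Ioc (z := 0) hω').symm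
  | p + 1, h => by
    rw [ceil_two_pow_succ_mul, ceil_two_pow_succ_mul, h p p.lt_succ_self,
      ceil_two_pow_mul_eq_of_dyadicDigit_eq hω hω' p fun i hi => h i (by omega)]

lemma dist_lt_of_dyadicDigit_eq {ω ω' : ℝ} (hω : ω ∈ Ioc 0 1) (hω' : ω' ∈ Ioc 0 1) {p : ℕ}
    (h : ∀ i < p, (dyadicDigit ω i = 1 ↔ dyadicDigit ω' i = 1)) : dist ω ω' < 2⁻¹ ^ p := by
  have hdigit : ∀ i < p, dyadicDigit ω i = dyadicDigit ω' i := fun i hi => by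
    have := h i hi
    rcases dyadicDigit_eq_zero_or_one ω i with h0 | h1 <;>
      rcases dyadicDigit_eq_zero_or_one ω' i with h0' | h1' <;> simp_all
  have hceil := ceil_two_pow_mul_eq_of_dyadicDigit_eq hω hω' p hdigit
  have h1 := Int.le_ceil ((2:ℝ) ^ p * ω)
  have h2 := Int.ceil_lt_add_one ((2:ℝ) ^ p * ω)
  have h3 := Int.le_ceil ((2:ℝ) ^ p * ω')
  have h4 := Int.ceil_lt_add_one ((2:ℝ) ^ p * ω')
  rw [hceil] at h1 h2
  have hpos : (0:ℝ) < 2 ^ p := by positivity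
  have hscaled : 2 ^ p * |ω - ω'| < 1 := by
    rw [← abs_of_pos hpos, ← abs_mul, mul_sub, abs_sub_lt_iff]
    constructor <;> linarith
  rw [Real.dist_eq, inv_pow, ← one_div, lt_div_iff₀ hpos]
  linarith

/-- Along a run of zero digits the quantity `2 ^ i * ω - ⌈2 ^ i * ω⌉ + 1 ∈ (0,1]` doubles at
each step. -/
lemma setOf_dyadicDigit_eq_one_infinite (ω : ℝ) : {i | dyadicDigit ω i = 1}.Infinite := by
  intro hfin
  obtain ⟨M, hM⟩ := hfin.bddAbove
  have hzero : ∀ i, M < i → dyadicDigit ω i = 0 := fun i hi =>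
    (dyadicDigit_eq_zero_or_one ω i).resolve_right fun h => (hM h).not_gt hi
  set r : ℝ := 2 ^ (M + 1) * ω - ⌈(2:ℝ) ^ (M + 1) * ω⌉ + 1 with hr
  have hr_pos : 0 < r := by linarith [Int.ceil_lt_add_one ((2:ℝ) ^ (M + 1) * ω)]
  have hdouble : ∀ t, 2 ^ (M + 1 + t) * ω - ⌈(2:ℝ) ^ (M + 1 + t) * ω⌉ + 1 = 2 ^ t * r := by
    intro t
    induction t with
    | zero => simp [hr]
    | succ t ih =>
      have hstep := ceil_two_pow_succ_mul ω (M + 1 + t)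
      rw [hzero _ (by omega)] at hstep
      rw [← add_assoc, hstep]; push_cast; linear_combination 2 * ih
  obtain ⟨t, ht⟩ := pow_unbounded_of_one_lt r⁻¹ (by norm_num : (1:ℝ) < 2)
  have hle := Int.le_ceil ((2:ℝ) ^ (M + 1 + t) * ω)
  have := mul_inv_cancel₀ hr_pos.ne'
  nlinarith [hdouble t]

lemma eventually_ceil_eq_ceil {y : ℝ} (hy : ∀ z : ℤ, y ≠ z) : ∀ᶠ y' in 𝓝 y, ⌈y'⌉ = ⌈y⌉ := by
  have hlt : y < ⌈y⌉ := (Int.le_ceil y).lt_of_ne (hy _)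
  have hgt : (⌈y⌉ : ℝ) - 1 < y := by linarith [Int.ceil_lt_add_one y]
  filter_upwards [Ioo_mem_nhds hgt hlt] with y' hy'
  exact Int.ceil_eq_iff.mpr ⟨hy'.1, hy'.2.le⟩

lemma eventually_dyadicDigit_eq {ω : ℝ} (hω : ∀ (i : ℕ) (z : ℤ), 2 ^ i * ω ≠ z) (M : ℕ) :
    ∀ᶠ ω' in 𝓝 ω, ∀ i < M, dyadicDigit ω' i = dyadicDigit ω i := by
  have hceil : ∀ i ∈ Finset.range (M + 1), ∀ᶠ ω' in 𝓝 ω, ⌈(2:ℝ) ^ i * ω'⌉ = ⌈(2:ℝ) ^ i * ω⌉ :=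
    fun i _ => ((continuous_const.mul continuous_id).tendsto ω).eventually
      (eventually_ceil_eq_ceil (hω i))
  filter_upwards [(Filter.eventually_all_finset _).mpr hceil] with ω' hω' i hi
  unfold dyadicDigit
  rw [hω' i (by simp; omega), hω' (i + 1) (by simp; omega)]

noncomputable def dyadicValue (E : Set ℕ) : ℝ := ∑' i, E.indicator (fun i => (2⁻¹ : ℝ) ^ (i + 1)) i

lemma summable_two_inv_pow_succ : Summable fun i : ℕ => (2⁻¹ : ℝ) ^ (i + 1) :=
  (summable_nat_add_iff 1).mpr (summable_geometric_of_lt_one (by norm_num) (by norm_num))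

lemma dyadicValue_univ : dyadicValue univ = 1 := by
  simp only [dyadicValue, indicator_univ, pow_succ, tsum_mul_right, tsum_geometric_inv_two]
  norm_num

lemma dyadicValue_mem_Ioo {E : Set ℕ} (hE : E.Nonempty) (hE' : Eᶜ.Nonempty) :
    dyadicValue E ∈ Ioo 0 1 := by
  obtain ⟨i, hi⟩ := hE
  obtain ⟨j, hj⟩ := hE'
  have hsum := summable_two_inv_pow_succ.indicator E
  refine ⟨hsum.tsum_pos (fun _ => indicator_nonneg (fun _ _ => by positivity) _) i
    (by simp [hi]), ?_⟩
  rw [← dyadicValue_univ, dyadicValue, dyadicValue, indicator_univ]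
  exact hsum.tsum_lt_tsum (i := j) (indicator_le_self' fun _ _ => by positivity)
    (by rw [indicator_of_notMem hj]; positivity) summable_two_inv_pow_succ

lemma two_mul_dyadicValue (E : Set ℕ) :
    2 * dyadicValue E = (E.indicator 1 0 : ℤ) + dyadicValue ((· + 1) ⁻¹' E) := by
  have hsum := summable_two_inv_pow_succ.indicator E
  rw [dyadicValue, hsum.tsum_eq_zero_add, mul_add, dyadicValue, ← tsum_mul_left]
  congr 1
  · by_cases h : 0 ∈ E <;> simp [h]
  · congr 1; ext i
    by_cases h : i + 1 ∈ E
    · simp [h, pow_succ]; ring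
    · simp [h]

lemma two_mul_dyadicValue_shift (E : Set ℕ) (i : ℕ) :
    2 * dyadicValue ((· + i) ⁻¹' E)
      = (E.indicator 1 i : ℤ) + dyadicValue ((· + (i + 1)) ⁻¹' E) := by
  have hdigit : ((· + i) ⁻¹' E).indicator (1 : ℕ → ℤ) 0 = E.indicator 1 i := by
    by_cases h : i ∈ E <;> simp [h]
  have hshift : (· + i) ∘ (· + 1) = (· + (i + 1)) := by
    funext j; simp only [Function.comp_apply]; omega
  rw [two_mul_dyadicValue, ← preimage_comp, hdigit, hshift]

lemma exists_two_pow_mul_dyadicValue (E : Set ℕ) :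
    ∀ i : ℕ, ∃ z : ℤ, 2 ^ i * dyadicValue E = z + dyadicValue ((· + i) ⁻¹' E)
  | 0 => ⟨0, by simp⟩
  | i + 1 => by
    obtain ⟨z, hz⟩ := exists_two_pow_mul_dyadicValue E i
    refine ⟨2 * z + E.indicator 1 i, ?_⟩
    rw [pow_succ, mul_comm _ (2:ℝ), mul_assoc, hz, mul_add, two_mul_dyadicValue_shift]
    push_cast
    ring

lemma dyadicValue_shift_mem_Ioo {E : Set ℕ} (hE : E.Infinite) (hE' : Eᶜ.Infinite) (i : ℕ) :
    dyadicValue ((· + i) ⁻¹' E) ∈ Ioo 0 1 := by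
  obtain ⟨j, hj, hij⟩ := hE.exists_gt i
  obtain ⟨j', hj', hij'⟩ := hE'.exists_gt i
  exact dyadicValue_mem_Ioo ⟨j - i, by simpa [Nat.sub_add_cancel hij.le]⟩
    ⟨j' - i, by simpa [Nat.sub_add_cancel hij'.le]⟩

lemma two_pow_mul_dyadicValue_ne_intCast {E : Set ℕ} (hE : E.Infinite) (hE' : Eᶜ.Infinite)
    (i : ℕ) (z' : ℤ) : 2 ^ i * dyadicValue E ≠ z' := by
  obtain ⟨z, hz⟩ := exists_two_pow_mul_dyadicValue E i
  obtain ⟨h0, h1⟩ := dyadicValue_shift_mem_Ioo hE hE' i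
  intro h
  rw [hz] at h
  have hlo : z < z' := by exact_mod_cast (by linarith : (z:ℝ) < z')
  have hhi : z' < z + 1 := by exact_mod_cast (by linarith : (z':ℝ) < z + 1)
  omega

lemma dyadicDigit_dyadicValue {E : Set ℕ} (hE : E.Infinite) (hE' : Eᶜ.Infinite) (i : ℕ) :
    dyadicDigit (dyadicValue E) i = E.indicator 1 i := by
  obtain ⟨z, hz⟩ := exists_two_pow_mul_dyadicValue E i
  have hv := dyadicValue_shift_mem_Ioo hE hE'
  have hsucc : (2:ℝ) ^ (i + 1) * dyadicValue E
      = ((2 * z + E.indicator 1 i : ℤ) : ℝ) + dyadicValue ((· + (i + 1)) ⁻¹' E) := by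
    rw [pow_succ, mul_comm _ (2:ℝ), mul_assoc, hz, mul_add, two_mul_dyadicValue_shift]
    push_cast
    ring
  unfold dyadicDigit
  rw [hz, hsucc, ceil_intCast_add_of_mem_Ioc (Ioo_subset_Ioc_self (hv i)),
    ceil_intCast_add_of_mem_Ioc (Ioo_subset_Ioc_self (hv (i + 1)))]
  ring

lemma Nat.count_congr_of_forall_lt {p q : ℕ → Prop} [DecidablePred p] [DecidablePred q] {n : ℕ}
    (h : ∀ i < n, p i ↔ q i) : Nat.count p n = Nat.count q n :=
  (Nat.count_mono_left fun i hi => (h i hi).1).antisymm (Nat.count_mono_left fun i hi => (h i hi).2)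

lemma Nat.nth_mem_Ico_of_forall_lt_iff {p q : ℕ → Prop} [DecidablePred p] [DecidablePred q]
    (hp : {i | p i}.Infinite) {M a k : ℕ} (hpq : ∀ i < M, p i ↔ q i)
    (ha : Nat.count q a ≤ k) (hk : k < Nat.count q M) :
    Nat.nth p k ∈ Ico a M ∧ q (Nat.nth p k) := by
  have haM : a ≤ M := by
    by_contra h
    exact (Nat.count_monotone q (by omega : M ≤ a)).not_gt (by omega)
  rw [← Nat.count_congr_of_forall_lt hpq] at hk
  rw [← Nat.count_congr_of_forall_lt fun i hi => hpq i (by omega)] at ha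
  have hlt := Nat.nth_lt_of_lt_count hk
  exact ⟨⟨(Nat.count_le_iff_le_nth hp).mp ha, hlt⟩, (hpq _ hlt).mp (Nat.nth_mem_of_infinite hp k)⟩

lemma exists_near_eventually_nth_mem {B : Set ℕ} (hB : B.Infinite) {ω₀ : ℝ} (hω₀ : ω₀ ∈ Ioc 0 1)
    {δ : ℝ} (hδ : 0 < δ) :
    ∃ c : ℕ, ∀ K : ℕ, ∃ ω₁ ∈ Ioc (0:ℝ) 1, dist ω₁ ω₀ < δ ∧
      ∀ᶠ ω in 𝓝 ω₁, ∀ k ∈ Icc c K, Nat.nth (fun i => dyadicDigit ω i = 1) k ∈ B := by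
  classical
  obtain ⟨p, hp⟩ := exists_pow_lt_of_lt_one hδ (by norm_num : (2⁻¹ : ℝ) < 1)
  refine ⟨Nat.count (fun i => dyadicDigit ω₀ i = 1) p, fun K => ?_⟩
  have hB' : {i | p ≤ i ∧ i ∈ B}.Infinite :=
    (hB.sdiff (finite_Iio p)).mono fun i hi => ⟨not_lt.mp hi.2, hi.1⟩
  set M := Nat.nth (fun i => p ≤ i ∧ i ∈ B) K + 1
  have hpM : p < M := Nat.lt_succ_of_le (Nat.nth_mem_of_infinite hB' K).1
  -- The tail of even numbers makes `E` infinite and coinfinite, so `dyadicValue E` is not a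
  -- dyadic rational and its first `M` digits are locally constant.
  set E : Set ℕ :=
    {i | (i < p ∧ dyadicDigit ω₀ i = 1) ∨ (p ≤ i ∧ i < M ∧ i ∈ B) ∨ (M ≤ i ∧ Even i)} with hE_def
  have hE : E.Infinite := infinite_of_forall_exists_gt fun a =>
    ⟨2 * (a + M), Or.inr (Or.inr ⟨by omega, even_two_mul _⟩), by omega⟩
  have hE' : Eᶜ.Infinite := infinite_of_forall_exists_gt fun a => by
    refine ⟨2 * (a + M) + 1, ?_, by omega⟩
    rintro (⟨h, -⟩ | ⟨-, h, -⟩ | ⟨-, h⟩)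
    · omega
    · omega
    · exact Nat.not_even_two_mul_add_one _ h
  have hlow : ∀ i < p, (i ∈ E ↔ dyadicDigit ω₀ i = 1) := fun i hi => by
    simp only [hE_def, mem_ofPred_eq]
    constructor
    · rintro (⟨-, h⟩ | ⟨h, -⟩ | ⟨h, -⟩) <;> first | exact h | omega
    · exact fun h => Or.inl ⟨hi, h⟩
  have hdigits : ∀ i, dyadicDigit (dyadicValue E) i = 1 ↔ i ∈ E := fun i => by
    rw [dyadicDigit_dyadicValue hE hE']
    by_cases h : i ∈ E <;> simp [h]
  have hval := Ioo_subset_Ioc_self (dyadicValue_mem_Ioo hE.nonempty hE'.nonempty)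
  refine ⟨dyadicValue E, hval, ?_, ?_⟩
  · refine (dist_lt_of_dyadicDigit_eq hval hω₀ fun i hi => ?_).trans hp
    rw [hdigits, hlow i hi]
  filter_upwards [eventually_dyadicDigit_eq (two_pow_mul_dyadicValue_ne_intCast hE hE') M]
    with ω hω k hk
  have hagree : ∀ i < M, dyadicDigit ω i = 1 ↔ i ∈ E := fun i hi => by rw [hω i hi, hdigits]
  have hcount_p : Nat.count (· ∈ E) p = Nat.count (fun i => dyadicDigit ω₀ i = 1) p :=
    Nat.count_congr_of_forall_lt hlow
  have hcount_M : K + 1 ≤ Nat.count (· ∈ E) M := by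
    rw [← Nat.count_nth_succ_of_infinite hB' K]
    exact Nat.count_mono_left fun i hi hiB => Or.inr (Or.inl ⟨hiB.1, hi, hiB.2⟩)
  obtain ⟨⟨hp_le, hlt⟩, hmem⟩ := Nat.nth_mem_Ico_of_forall_lt_iff
    (setOf_dyadicDigit_eq_one_infinite ω) hagree (hcount_p ▸ hk.1) (hk.2.trans_lt hcount_M)
  rcases hmem with ⟨h, -⟩ | ⟨-, -, h⟩ | ⟨h, -⟩
  · omega
  · exact h
  · omega

lemma eventually_forall_mem_le_of_pairwise_disjoint {P : ℕ → Set ℕ}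
    (hP : Pairwise (Function.onFun Disjoint P)) (c : ℕ) : ∀ᶠ n in atTop, ∀ k ∈ P n, c ≤ k := by
  have hnot : ∀ k ∈ Finset.range c, ∀ᶠ n in atTop, k ∉ P n := fun k _ => by
    rw [← Nat.cofinite_eq_atTop]
    refine Finite.eventually_cofinite_notMem (s := {n | k ∈ P n}) ?_
    exact Subsingleton.finite fun n hn n' hn' =>
      by_contra fun hne => disjoint_left.mp (hP hne) hn hn'
  filter_upwards [(Filter.eventually_all_finset _).mpr hnot] with n hn k hk
  by_contra hlt
  exact hn k (Finset.mem_range.mpr (not_le.mp hlt)) hk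

lemma mem_Zmu_of_finite {P : ℕ → Set ℕ} {μ : ℕ → Set ℕ → ℝ≥0∞}
    (hP : Pairwise (Function.onFun Disjoint P)) (hμ : ∀ n, μ n ∅ = 0) {A : Set ℕ} (hA : A.Finite) : A ∈ Zmu P μ := by
  obtain ⟨c, hc⟩ := hA.bddAbove
  refine tendsto_const_nhds.congr' ?_
  filter_upwards [eventually_forall_mem_le_of_pairwise_disjoint hP (c + 1)] with n hn
  have hempty : A ∩ P n = ∅ :=
    eq_empty_of_forall_notMem fun k hk => (hn k hk.2).not_gt (Nat.lt_succ_of_le (hc hk.1))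
  rw [hempty, hμ]

lemma residual_exists_lt_measure {X : Type*} {x : ℕ → X} {P : ℕ → Set ℕ}
    {μ : ℕ → Set ℕ → ℝ≥0∞} {q : ℝ≥0∞} (hPdisj : Pairwise (Function.onFun Disjoint P))
    (hPfin : ∀ n, (P n).Finite) (hq : ∃ᶠ n in atTop, q < μ n (P n)) {S : Set X}
    (hS : {i | x i ∈ S}.Infinite) (N : ℕ) :
    {ω : Ioc (0:ℝ) 1 | ∃ n ≥ N, q < μ n ({k | subseq x ω k ∈ S} ∩ P n)}
      ∈ residual (Ioc (0:ℝ) 1) := by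
  refine mem_of_superset (residual_of_dense_open isOpen_interior ?_) interior_subset
  refine Metric.dense_iff.mpr fun ω₀ δ hδ => ?_
  obtain ⟨c, hc⟩ := exists_near_eventually_nth_mem hS ω₀.2 hδ
  obtain ⟨n, hnN, hqn, hPc⟩ := frequently_atTop.mp
    (hq.and_eventually (eventually_forall_mem_le_of_pairwise_disjoint hPdisj c)) N
  obtain ⟨K, hK⟩ := (hPfin n).bddAbove
  obtain ⟨ω₁, hω₁, hdist, hev⟩ := hc K
  refine ⟨⟨ω₁, hω₁⟩, hdist, mem_interior_iff_mem_nhds.mpr ?_⟩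
  filter_upwards [(continuous_subtype_val.tendsto _).eventually hev] with ω hω
  have hsub : P n ⊆ {k | subseq x ω k ∈ S} := fun k hk => hω k ⟨hPc k hk, hK hk⟩
  exact ⟨n, hnN, by rwa [inter_eq_right.mpr hsub]⟩

theorem Vset_comeager_or_empty_general {X : Type*}
    (x : ℕ → X) (P : ℕ → Set ℕ) (μ : ℕ → Set ℕ → ℝ≥0∞)
    (hP : IsFinPartition P) (hμ : ∀ n, IsSubmeasureOn (μ n))
    (q : ℝ≥0∞) (hq0 : 0 < q) (hq : q < Filter.limsup (fun n => μ n (P n)) atTop)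
    (U : ℕ → Set X) :
    IsMeagre {ω : Set.Ioc (0:ℝ) 1 | ¬ ∀ m : ℕ,
        q ≤ Filter.limsup (fun n => μ n ({k | subseq x ↑ω k ∈ U m} ∩ P n)) atTop} ∨
    {ω : Set.Ioc (0:ℝ) 1 | ∀ m : ℕ,
        q ≤ Filter.limsup (fun n => μ n ({k | subseq x ↑ω k ∈ U m} ∩ P n)) atTop} = ∅ := by
  by_cases hU : ∀ m, {i | x i ∈ U m}.Infinite
  · left
    have hfreq : ∃ᶠ n in atTop, q < μ n (P n) := frequently_lt_of_lt_limsup (by isBoundedDefault) hq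
    refine mem_of_superset (countable_iInter_mem.mpr fun m => countable_iInter_mem.mpr fun N =>
      residual_exists_lt_measure hP.2.2 (fun n => (hP.1 n).1) hfreq (hU m) N) fun ω hω => ?_
    simp only [mem_iInter, mem_ofPred_eq] at hω
    simp only [mem_compl_iff, mem_ofPred_eq, not_not]
    exact fun m => le_limsup_of_frequently_le' <| frequently_atTop.mpr fun N =>
      (hω m N).imp fun n ⟨hn, h⟩ => ⟨hn, h.le⟩
  · right
    obtain ⟨m, hm⟩ : ∃ m, {i | x i ∈ U m}.Finite := by simpa using hU
    refine eq_empty_of_forall_notMem fun ω hω => hq0.not_ge ?_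
    have hfin : (Nat.nth (fun i => dyadicDigit ω i = 1) ⁻¹' {i | x i ∈ U m}).Finite :=
      hm.preimage (Nat.nth_strictMono (setOf_dyadicDigit_eq_one_infinite ω)).injective.injOn
    have hZ := mem_Zmu_of_finite (A := {k | subseq x ω k ∈ U m}) hP.2.2 (fun n => (hμ n).1) hfin
    simpa [hZ.limsup_eq] using hω m

/-- The set `V_ℓ(x;q)` is either comeager in `(0,1]` or empty. -/
theorem Vset_comeager_or_empty {X : Type*} [TopologicalSpace X]
    [FirstCountableTopology X]
    (x : ℕ → X) (P : ℕ → Set ℕ) (μ : ℕ → Set ℕ → ℝ≥0∞)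
    (hP : IsFinPartition P) (hμ : ∀ n, IsSubmeasureOn (μ n))
    (hconc : ∀ n A, μ n A = μ n (A ∩ P n))
    (q : ℝ≥0∞) (hq0 : 0 < q) (hq : q < Filter.limsup (fun n => μ n (P n)) atTop)
    (l : X) (U : ℕ → Set X) (hU : (𝓝 l).HasBasis (fun _ : ℕ => True) U)
    (hUanti : Antitone U) :
    IsMeagre {ω : Set.Ioc (0:ℝ) 1 | ¬ ∀ m : ℕ,
        q ≤ Filter.limsup (fun n => μ n ({k | subseq x ↑ω k ∈ U m} ∩ P n)) atTop} ∨
    {ω : Set.Ioc (0:ℝ) 1 | ∀ m : ℕ,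
        q ≤ Filter.limsup (fun n => μ n ({k | subseq x ↑ω k ∈ U m} ∩ P n)) atTop} = ∅ :=
  Vset_comeager_or_empty_general x P μ hP hμ q hq0 hq U
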